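/- Let 𝒜_1, 𝒜_2 be quasi-orthogonal unital *-subalgebras of M_n(ℂ) and ℬ a unital *-subalgebra with ℬ ⊆ 𝒜_1 + 𝒜_2 (as a linear subspace). Then either ℬ ⊆ 𝒜_1, or ℬ ⊆ 𝒜_2, or ℬ is isomorphic to ℂ² (i.e., dim ℬ ≤ 2 and ℬ is abelian). -/

import Mathlib

open Matrix BigOperators

noncomputable section

abbrev Mat (n : ℕ) := Matrix (Fin n) (Fin n) ℂ

/-- Two unital *-subalgebras of `M_n(ℂ)` are quasi-orthogonal iff
`τ(AB) = τ(A)τ(B)` for all members, where `τ = (1/n)Tr`. -/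
def QuasiOrth {n : ℕ} (𝒜 ℬ : StarSubalgebra ℂ (Mat n)) : Prop :=
  ∀ A ∈ 𝒜, ∀ B ∈ ℬ, (n : ℂ) * (A * B).trace = A.trace * B.trace

/-!
Write a traceless `x ∈ ℬ` as `x₁ + x₂` with `xᵢ ∈ 𝒜ᵢ` traceless. Quasi-orthogonality gives
`‖a * b‖₂ = ‖a‖₂ ‖b‖₂` for `a ∈ 𝒜₁`, `b ∈ 𝒜₂`, and makes `a * b` Hilbert–Schmidt orthogonal
to `𝒜₁ + 𝒜₂` when `a`, `b` are traceless. For traceless `x, y ∈ ℬ` the element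
`x₁ * y₂ + x₂ * y₁ = x * y - x₁ * y₁ - x₂ * y₂` lies in `𝒜₁ + 𝒜₂`, hence vanishes.

If `ℬ` lies in neither `𝒜ᵢ`, some traceless `x ∈ ℬ` has both components nonzero. Given a
traceless `y ∈ ℬ`, let `z = y - r • x` with `r` chosen so that `τ(x₁ᴴ * z₁) = 0`. The relations
for the pairs `(x, xᴴ)` and `(xᴴ, z)` give
`(x₁ᴴ * z₁)ᴴ * (x₂ᴴ * z₂) = (x₂ᴴ * z₁)ᴴ * (x₂ᴴ * z₁)`, whose left side has trace
`conj τ(x₁ᴴ * z₁) * τ(x₂ᴴ * z₂) = 0`. Hence `x₂ᴴ * z₁ = 0`, so `z₁ = 0`, then `z₂ = 0`, and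
`ℬ ⊆ span {1, x}`.
-/

open scoped ComplexOrder

theorem Submodule.finrank_le_two_of_le_span_pair {K V : Type*} [DivisionRing K]
    [AddCommGroup V] [Module K V] {p : Submodule K V} {a b : V} (h : p ≤ span K {a, b}) :
    Module.finrank K p ≤ 2 := by
  classical
  have := FiniteDimensional.span_of_finite K (Set.toFinite {a, b})
  calc Module.finrank K p ≤ Module.finrank K (span K ({a, b} : Set V)) := finrank_mono h
    _ ≤ ({a, b} : Set V).toFinset.card := finrank_span_le_card _
    _ ≤ 2 := by
      rw [Set.toFinset_insert, Set.toFinset_singleton]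
      exact (Finset.card_insert_le _ _).trans (by rw [Finset.card_singleton])

theorem Submodule.commute_of_mem_span_one_pair {K A : Type*} [CommSemiring K] [Semiring A]
    [Algebra K A] {a x y : A} (hx : x ∈ span K {1, a}) (hy : y ∈ span K {1, a}) :
    Commute x y := by
  obtain ⟨α, β, rfl⟩ := mem_span_pair.mp hx
  obtain ⟨γ, δ, rfl⟩ := mem_span_pair.mp hy
  refine .add_left (.add_right ?_ ?_) (.add_right ?_ ?_) <;>
    exact .smul_left (.smul_right (by simp) _) _

variable {n : ℕ}

def tracelessPart (x : Mat n) : Mat n := x - (x.trace / n) • 1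

theorem tracelessPart_add (x y : Mat n) :
    tracelessPart (x + y) = tracelessPart x + tracelessPart y := by
  simp only [tracelessPart, trace_add, add_div, add_smul]
  abel

theorem tracelessPart_eq_self {x : Mat n} (hx : x.trace = 0) : tracelessPart x = x := by
  simp [tracelessPart, hx]

theorem trace_tracelessPart [NeZero n] (x : Mat n) : (tracelessPart x).trace = 0 := by
  simp [tracelessPart, trace_sub, trace_smul, trace_one, div_mul_cancel₀ _ (NeZero.ne (n : ℂ))]

theorem tracelessPart_mem_iff {𝒜 : StarSubalgebra ℂ (Mat n)} {x : Mat n} :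
    tracelessPart x ∈ 𝒜 ↔ x ∈ 𝒜 :=
  Submodule.sub_mem_iff_left (Subalgebra.toSubmodule 𝒜.toSubalgebra)
    (SMulMemClass.smul_mem _ (one_mem 𝒜))

structure TracelessSplit (𝒜₁ 𝒜₂ : StarSubalgebra ℂ (Mat n)) (x x₁ x₂ : Mat n) : Prop where
  mem₁ : x₁ ∈ 𝒜₁
  mem₂ : x₂ ∈ 𝒜₂
  trace₁ : x₁.trace = 0
  trace₂ : x₂.trace = 0
  eq_add : x = x₁ + x₂

namespace TracelessSplit

variable {𝒜₁ 𝒜₂ : StarSubalgebra ℂ (Mat n)} {x x₁ x₂ y y₁ y₂ : Mat n}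

theorem conjTranspose (hx : TracelessSplit 𝒜₁ 𝒜₂ x x₁ x₂) :
    TracelessSplit 𝒜₁ 𝒜₂ xᴴ x₁ᴴ x₂ᴴ where
  mem₁ := star_mem hx.mem₁
  mem₂ := star_mem hx.mem₂
  trace₁ := by rw [trace_conjTranspose, hx.trace₁, star_zero]
  trace₂ := by rw [trace_conjTranspose, hx.trace₂, star_zero]
  eq_add := by rw [hx.eq_add, conjTranspose_add]

theorem sub_smul (hx : TracelessSplit 𝒜₁ 𝒜₂ x x₁ x₂) (hy : TracelessSplit 𝒜₁ 𝒜₂ y y₁ y₂)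
    (r : ℂ) : TracelessSplit 𝒜₁ 𝒜₂ (y - r • x) (y₁ - r • x₁) (y₂ - r • x₂) where
  mem₁ := sub_mem hy.mem₁ (SMulMemClass.smul_mem r hx.mem₁)
  mem₂ := sub_mem hy.mem₂ (SMulMemClass.smul_mem r hx.mem₂)
  trace₁ := by rw [trace_sub, trace_smul, hx.trace₁, hy.trace₁, smul_zero, sub_zero]
  trace₂ := by rw [trace_sub, trace_smul, hx.trace₂, hy.trace₂, smul_zero, sub_zero]
  eq_add := by rw [hx.eq_add, hy.eq_add, smul_add]; abel

theorem mem_left (hx : TracelessSplit 𝒜₁ 𝒜₂ x x₁ x₂) (h₂ : x₂ = 0) : x ∈ 𝒜₁ := by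
  rw [hx.eq_add, h₂, add_zero]; exact hx.mem₁

theorem mem_right (hx : TracelessSplit 𝒜₁ 𝒜₂ x x₁ x₂) (h₁ : x₁ = 0) : x ∈ 𝒜₂ := by
  rw [hx.eq_add, h₁, zero_add]; exact hx.mem₂

end TracelessSplit

theorem exists_tracelessSplit [NeZero n] {𝒜₁ 𝒜₂ : StarSubalgebra ℂ (Mat n)} {x : Mat n}
    (hx : x ∈ Subalgebra.toSubmodule 𝒜₁.toSubalgebra ⊔ Subalgebra.toSubmodule 𝒜₂.toSubalgebra)
    (htr : x.trace = 0) : ∃ x₁ x₂, TracelessSplit 𝒜₁ 𝒜₂ x x₁ x₂ := by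
  obtain ⟨u, hu, v, hv, rfl⟩ := Submodule.mem_sup.mp hx
  exact ⟨tracelessPart u, tracelessPart v, tracelessPart_mem_iff.mpr hu,
    tracelessPart_mem_iff.mpr hv, trace_tracelessPart u, trace_tracelessPart v,
    by rw [← tracelessPart_add, tracelessPart_eq_self htr]⟩

namespace QuasiOrth

variable {𝒜₁ 𝒜₂ : StarSubalgebra ℂ (Mat n)}

theorem symm (h : QuasiOrth 𝒜₁ 𝒜₂) : QuasiOrth 𝒜₂ 𝒜₁ := fun A hA B hB => by
  rw [trace_mul_comm, h B hB A hA, mul_comm]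

theorem eq_zero_or_eq_zero_of_mul_eq_zero (h : QuasiOrth 𝒜₁ 𝒜₂) {a b : Mat n}
    (ha : a ∈ 𝒜₁) (hb : b ∈ 𝒜₂) (hab : a * b = 0) : a = 0 ∨ b = 0 := by
  have key : (n : ℂ) * ((a * b)ᴴ * (a * b)).trace = (aᴴ * a).trace * (b * bᴴ).trace := by
    rw [← h (aᴴ * a) (mul_mem (star_mem ha) ha) (b * bᴴ) (mul_mem hb (star_mem hb)),
      conjTranspose_mul, Matrix.mul_assoc, trace_mul_comm]
    simp only [Matrix.mul_assoc]
  rw [hab, Matrix.mul_zero, trace_zero, mul_zero, eq_comm, mul_eq_zero,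
    trace_conjTranspose_mul_self_eq_zero_iff, trace_mul_conjTranspose_self_eq_zero_iff] at key
  exact key

theorem trace_conjTranspose_mul_eq_zero [NeZero n] (h : QuasiOrth 𝒜₁ 𝒜₂) {a b u : Mat n}
    (ha : a ∈ 𝒜₁) (hb : b ∈ 𝒜₂) (ha₀ : a.trace = 0) (hb₀ : b.trace = 0)
    (hu : u ∈ Subalgebra.toSubmodule 𝒜₁.toSubalgebra ⊔ Subalgebra.toSubmodule 𝒜₂.toSubalgebra) :
    ((a * b)ᴴ * u).trace = 0 := by
  obtain ⟨u₁, hu₁, u₂, hu₂, rfl⟩ := Submodule.mem_sup.mp hu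
  have h₁ : ((a * b)ᴴ * u₁).trace = 0 := by
    refine (mul_eq_zero.mp ?_).resolve_left (NeZero.ne (n : ℂ))
    rw [conjTranspose_mul, Matrix.mul_assoc, trace_mul_comm,
      h (aᴴ * u₁) (mul_mem (star_mem ha) hu₁) bᴴ (star_mem hb), trace_conjTranspose, hb₀,
      star_zero, mul_zero]
  have h₂ : ((a * b)ᴴ * u₂).trace = 0 := by
    refine (mul_eq_zero.mp ?_).resolve_left (NeZero.ne (n : ℂ))
    rw [conjTranspose_mul, Matrix.mul_assoc, trace_mul_comm, Matrix.mul_assoc,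
      h aᴴ (star_mem ha) (u₂ * bᴴ) (mul_mem hu₂ (star_mem hb)), trace_conjTranspose, ha₀,
      star_zero, zero_mul]
  rw [Matrix.mul_add, trace_add, h₁, h₂, add_zero]

theorem mul_add_mul_eq_zero [NeZero n] (h : QuasiOrth 𝒜₁ 𝒜₂) {x y x₁ x₂ y₁ y₂ : Mat n}
    (hxy : x * y ∈
      Subalgebra.toSubmodule 𝒜₁.toSubalgebra ⊔ Subalgebra.toSubmodule 𝒜₂.toSubalgebra)
    (hx : TracelessSplit 𝒜₁ 𝒜₂ x x₁ x₂) (hy : TracelessSplit 𝒜₁ 𝒜₂ y y₁ y₂) :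
    x₁ * y₂ + x₂ * y₁ = 0 := by
  have hc : x₁ * y₂ + x₂ * y₁ ∈
      Subalgebra.toSubmodule 𝒜₁.toSubalgebra ⊔ Subalgebra.toSubmodule 𝒜₂.toSubalgebra := by
    have : x₁ * y₂ + x₂ * y₁ = x * y - x₁ * y₁ - x₂ * y₂ := by
      rw [hx.eq_add, hy.eq_add]; noncomm_ring
    rw [this]
    exact sub_mem (sub_mem hxy (Submodule.mem_sup_left (mul_mem hx.mem₁ hy.mem₁ : _ ∈ 𝒜₁)))
      (Submodule.mem_sup_right (mul_mem hx.mem₂ hy.mem₂ : _ ∈ 𝒜₂))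
  rw [← trace_conjTranspose_mul_self_eq_zero_iff, conjTranspose_add, Matrix.add_mul, trace_add,
    h.trace_conjTranspose_mul_eq_zero hx.mem₁ hy.mem₂ hx.trace₁ hy.trace₂ hc,
    h.symm.trace_conjTranspose_mul_eq_zero hx.mem₂ hy.mem₁ hx.trace₂ hy.trace₁
      (sup_comm (a := Subalgebra.toSubmodule 𝒜₁.toSubalgebra) _ ▸ hc), add_zero]

theorem mul_eq_zero_of_trace_mul_eq_zero [NeZero n] (h : QuasiOrth 𝒜₁ 𝒜₂)
    {a₁ a₂ z₁ z₂ : Mat n} (ha₁ : a₁ ∈ 𝒜₁) (ha₂ : a₂ ∈ 𝒜₂) (hz₁ : z₁ ∈ 𝒜₁) (hz₂ : z₂ ∈ 𝒜₂)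
    (ha : a₁ * a₂ᴴ + a₂ * a₁ᴴ = 0) (hz : a₁ᴴ * z₂ + a₂ᴴ * z₁ = 0)
    (htr : (a₁ᴴ * z₁).trace = 0) : a₂ᴴ * z₁ = 0 := by
  have hprod : (a₁ᴴ * z₁)ᴴ * (a₂ᴴ * z₂) = (a₂ᴴ * z₁)ᴴ * (a₂ᴴ * z₁) :=
    calc (a₁ᴴ * z₁)ᴴ * (a₂ᴴ * z₂) = z₁ᴴ * (a₁ * a₂ᴴ) * z₂ := by
          rw [conjTranspose_mul, conjTranspose_conjTranspose]; noncomm_ring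
      _ = -(z₁ᴴ * a₂ * (a₁ᴴ * z₂)) := by rw [eq_neg_of_add_eq_zero_left ha]; noncomm_ring
      _ = (a₂ᴴ * z₁)ᴴ * (a₂ᴴ * z₁) := by
          rw [eq_neg_of_add_eq_zero_left hz, conjTranspose_mul, conjTranspose_conjTranspose]
          noncomm_ring
  rw [← trace_conjTranspose_mul_self_eq_zero_iff, ← hprod]
  refine (mul_eq_zero.mp ?_).resolve_left (NeZero.ne (n : ℂ))
  rw [h (a₁ᴴ * z₁)ᴴ (star_mem (mul_mem (star_mem ha₁) hz₁)) (a₂ᴴ * z₂)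
      (mul_mem (star_mem ha₂) hz₂),
    trace_conjTranspose, htr, star_zero, zero_mul]

theorem exists_eq_smul [NeZero n] (h : QuasiOrth 𝒜₁ 𝒜₂) {ℬ : StarSubalgebra ℂ (Mat n)}
    (hsub : Subalgebra.toSubmodule ℬ.toSubalgebra ≤
      Subalgebra.toSubmodule 𝒜₁.toSubalgebra ⊔ Subalgebra.toSubmodule 𝒜₂.toSubalgebra)
    {x y x₁ x₂ y₁ y₂ : Mat n} (hxB : x ∈ ℬ) (hyB : y ∈ ℬ)
    (hx : TracelessSplit 𝒜₁ 𝒜₂ x x₁ x₂) (hy : TracelessSplit 𝒜₁ 𝒜₂ y y₁ y₂)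
    (hx₁ : x₁ ≠ 0) (hx₂ : x₂ ≠ 0) : ∃ r : ℂ, y = r • x := by
  set r := (x₁ᴴ * y₁).trace / (x₁ᴴ * x₁).trace
  have hz := hx.sub_smul hy r
  have hzB : y - r • x ∈ ℬ := sub_mem hyB (SMulMemClass.smul_mem r hxB)
  have hxx := h.mul_add_mul_eq_zero (hsub (mul_mem hxB (star_mem hxB) : _ ∈ ℬ))
    hx hx.conjTranspose
  have hxz := h.mul_add_mul_eq_zero (hsub (mul_mem (star_mem hxB) hzB : _ ∈ ℬ))
    hx.conjTranspose hz
  have htr : (x₁ᴴ * (y₁ - r • x₁)).trace = 0 := by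
    rw [Matrix.mul_sub, Matrix.mul_smul, trace_sub, trace_smul, smul_eq_mul,
      div_mul_cancel₀ _ (trace_conjTranspose_mul_self_eq_zero_iff.not.mpr hx₁), sub_self]
  have hz₁ : y₁ - r • x₁ = 0 :=
    (h.symm.eq_zero_or_eq_zero_of_mul_eq_zero (star_mem hx.mem₂) hz.mem₁
      (h.mul_eq_zero_of_trace_mul_eq_zero hx.mem₁ hx.mem₂ hz.mem₁ hz.mem₂ hxx hxz htr)
      ).resolve_left (conjTranspose_eq_zero.not.mpr hx₂)
  rw [hz₁, Matrix.mul_zero, add_zero] at hxz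
  have hz₂ : y₂ - r • x₂ = 0 :=
    (h.eq_zero_or_eq_zero_of_mul_eq_zero (star_mem hx.mem₁) hz.mem₂ hxz).resolve_left
      (conjTranspose_eq_zero.not.mpr hx₁)
  exact ⟨r, sub_eq_zero.mp (by rw [hz.eq_add, hz₁, hz₂, add_zero])⟩

theorem exists_tracelessSplit_ne_zero [NeZero n] (h : QuasiOrth 𝒜₁ 𝒜₂)
    {ℬ : StarSubalgebra ℂ (Mat n)}
    (hsub : Subalgebra.toSubmodule ℬ.toSubalgebra ≤
      Subalgebra.toSubmodule 𝒜₁.toSubalgebra ⊔ Subalgebra.toSubmodule 𝒜₂.toSubalgebra)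
    {b c : Mat n} (hbB : b ∈ ℬ) (hb : b ∉ 𝒜₁) (hcB : c ∈ ℬ) (hc : c ∉ 𝒜₂) :
    ∃ x x₁ x₂, x ∈ ℬ ∧ TracelessSplit 𝒜₁ 𝒜₂ x x₁ x₂ ∧ x₁ ≠ 0 ∧ x₂ ≠ 0 := by
  have hxB : tracelessPart b ∈ ℬ := tracelessPart_mem_iff.mpr hbB
  have hwB : tracelessPart c ∈ ℬ := tracelessPart_mem_iff.mpr hcB
  obtain ⟨x₁, x₂, hx⟩ := exists_tracelessSplit (hsub hxB) (trace_tracelessPart b)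
  obtain ⟨w₁, w₂, hw⟩ := exists_tracelessSplit (hsub hwB) (trace_tracelessPart c)
  have hx₂ : x₂ ≠ 0 := fun h₂ => hb (tracelessPart_mem_iff.mp (hx.mem_left h₂))
  have hw₁ : w₁ ≠ 0 := fun h₁ => hc (tracelessPart_mem_iff.mp (hw.mem_right h₁))
  refine ⟨_, x₁, x₂, hxB, hx, ?_, hx₂⟩
  rintro rfl
  have hwx := h.mul_add_mul_eq_zero (hsub (mul_mem hwB hxB : _ ∈ ℬ)) hw hx
  rw [Matrix.mul_zero, add_zero] at hwx
  exact (h.eq_zero_or_eq_zero_of_mul_eq_zero hw.mem₁ hx.mem₂ hwx).elim hw₁ hx₂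

theorem le_span_one_pair [NeZero n] (h : QuasiOrth 𝒜₁ 𝒜₂) {ℬ : StarSubalgebra ℂ (Mat n)}
    (hsub : Subalgebra.toSubmodule ℬ.toSubalgebra ≤
      Subalgebra.toSubmodule 𝒜₁.toSubalgebra ⊔ Subalgebra.toSubmodule 𝒜₂.toSubalgebra)
    {x x₁ x₂ : Mat n} (hxB : x ∈ ℬ) (hx : TracelessSplit 𝒜₁ 𝒜₂ x x₁ x₂) (hx₁ : x₁ ≠ 0)
    (hx₂ : x₂ ≠ 0) : Subalgebra.toSubmodule ℬ.toSubalgebra ≤ Submodule.span ℂ {1, x} := by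
  intro y hyB
  have hy₀B : tracelessPart y ∈ ℬ := tracelessPart_mem_iff.mpr hyB
  obtain ⟨y₁, y₂, hy⟩ := exists_tracelessSplit (hsub hy₀B) (trace_tracelessPart y)
  obtain ⟨r, hr⟩ := h.exists_eq_smul hsub hxB hy₀B hx hy hx₁ hx₂
  exact Submodule.mem_span_pair.mpr ⟨y.trace / n, r, by rw [← hr, tracelessPart]; abel⟩

end QuasiOrth

/-- if `ℬ ⊆ 𝒜₁ + 𝒜₂` for quasi-orthogonal `𝒜₁, 𝒜₂`, then
`ℬ ⊆ 𝒜₁`, or `ℬ ⊆ 𝒜₂`, or `ℬ ≅ ℂ²` (i.e. `dim ℬ ≤ 2` and `ℬ` is abelian). -/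
theorem stmt13 {n : ℕ} (𝒜₁ 𝒜₂ ℬ : StarSubalgebra ℂ (Mat n))
    (h : QuasiOrth 𝒜₁ 𝒜₂)
    (hsub : Subalgebra.toSubmodule ℬ.toSubalgebra ≤
      Subalgebra.toSubmodule 𝒜₁.toSubalgebra ⊔ Subalgebra.toSubmodule 𝒜₂.toSubalgebra) :
    (∀ b ∈ ℬ, b ∈ 𝒜₁) ∨ (∀ b ∈ ℬ, b ∈ 𝒜₂) ∨
    (Module.finrank ℂ ℬ ≤ 2 ∧ ∀ x ∈ ℬ, ∀ y ∈ ℬ, x * y = y * x) := by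
  rcases Nat.eq_zero_or_pos n with rfl | hn
  · exact Or.inl fun b _ => Subsingleton.elim 0 b ▸ zero_mem 𝒜₁
  have : NeZero n := ⟨hn.ne'⟩
  refine or_iff_not_imp_left.mpr fun hB₁ => or_iff_not_imp_left.mpr fun hB₂ => ?_
  push Not at hB₁ hB₂
  obtain ⟨b, hbB, hb⟩ := hB₁
  obtain ⟨c, hcB, hc⟩ := hB₂
  obtain ⟨x, x₁, x₂, hxB, hx, hx₁, hx₂⟩ := h.exists_tracelessSplit_ne_zero hsub hbB hb hcB hc
  have hspan := h.le_span_one_pair hsub hxB hx hx₁ hx₂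
  exact ⟨Submodule.finrank_le_two_of_le_span_pair hspan, fun y hy z hz =>
    Submodule.commute_of_mem_span_one_pair (hspan hy) (hspan hz)⟩
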